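/- arXiv:1812.05468 — 8 statements merged into one kernel-verified Lean document; each statement's English description precedes it below -/
import Mathlib

section
/- Let m > 0 and define p(r) = 48 m^3 - 16 m^2 r - r^{3/2} √(r^3 + 2 m r^2 + 4 m^2 r + 72 m^3) for r > 0. Then p(r̄) = 0 where r̄ is the unique positive root of the cubic 32 m^3 - 16 m^2 r - r^3; that is, the positive root of p coincides with the real root of q(r) = (32 m^3 - 16 m^2 r - r^3) r. -/
/-!
On the cubic, `16 m² r̄ = 32 m³ - r̄³`, which makes `r̄³ (r̄³ + 2 m r̄² + 4 m² r̄ + 72 m³)` the perfect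
square `(48 m³ - 16 m² r̄)²`, with `48 m³ - 16 m² r̄ = 8 m² r̄ + 3 r̄³ / 2 ≥ 0`. Since
`r̄^{3/2} = √(r̄³)`, the radical term of `p r̄` is exactly `48 m³ - 16 m² r̄`.
-/

open Real

theorem Real.rpow_natCast_div_two_eq_sqrt_pow {x : ℝ} (hx : 0 ≤ x) (n : ℕ) :
    x ^ ((n : ℝ) / 2) = √(x ^ n) := by
  rw [sqrt_eq_rpow, ← rpow_natCast, ← rpow_mul hx]
  ring_nf

theorem cube_mul_eq_sq_of_cubic_eq_zero {R : Type*} [CommRing R] {m r : R}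
    (h : 32 * m ^ 3 - 16 * m ^ 2 * r - r ^ 3 = 0) :
    r ^ 3 * (r ^ 3 + 2 * m * r ^ 2 + 4 * m ^ 2 * r + 72 * m ^ 3)
      = (48 * m ^ 3 - 16 * m ^ 2 * r) ^ 2 := by
  linear_combination (16 * m ^ 2 * r - r ^ 3 - 2 * m * r ^ 2 - 4 * m ^ 2 * r - 72 * m ^ 3) * h

theorem nonneg_of_cubic_eq_zero {K : Type*} [Field K] [LinearOrder K] [IsStrictOrderedRing K]
    {m r : K} (hr : 0 ≤ r) (h : 32 * m ^ 3 - 16 * m ^ 2 * r - r ^ 3 = 0) :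
    0 ≤ 48 * m ^ 3 - 16 * m ^ 2 * r := by
  have hm2r : 0 ≤ m ^ 2 * r := mul_nonneg (sq_nonneg m) hr
  have hr3 : 0 ≤ r ^ 3 := pow_nonneg hr 3
  linarith

theorem stmt_1_general (m : ℝ)
    (p : ℝ → ℝ)
    (hp : ∀ r, p r = 48 * m ^ 3 - 16 * m ^ 2 * r -
      r ^ ((3 : ℝ) / 2) * Real.sqrt (r ^ 3 + 2 * m * r ^ 2 + 4 * m ^ 2 * r + 72 * m ^ 3))
    (rbar : ℝ) (hpos : 0 < rbar)
    (hroot : 32 * m ^ 3 - 16 * m ^ 2 * rbar - rbar ^ 3 = 0) :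
    p rbar = 0 := by
  have hr : 0 ≤ rbar := hpos.le
  have h32 : rbar ^ ((3 : ℝ) / 2) = √(rbar ^ 3) := by
    exact_mod_cast Real.rpow_natCast_div_two_eq_sqrt_pow hr 3
  rw [hp, h32, ← sqrt_mul (pow_nonneg hr 3), cube_mul_eq_sq_of_cubic_eq_zero hroot,
    sqrt_sq (nonneg_of_cubic_eq_zero hr hroot), sub_self]

/-- The positive root of `p` coincides with the unique positive root of the cubic
`32 m^3 - 16 m^2 r - r^3` (the real root of `q r = (32 m^3 - 16 m^2 r - r^3) r`). -/
theorem stmt_1 (m : ℝ) (hm : 0 < m)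
    (p : ℝ → ℝ)
    (hp : ∀ r, p r = 48 * m ^ 3 - 16 * m ^ 2 * r -
      r ^ ((3 : ℝ) / 2) * Real.sqrt (r ^ 3 + 2 * m * r ^ 2 + 4 * m ^ 2 * r + 72 * m ^ 3))
    (rbar : ℝ) (hpos : 0 < rbar)
    (hroot : 32 * m ^ 3 - 16 * m ^ 2 * rbar - rbar ^ 3 = 0) :
    p rbar = 0 :=
  stmt_1_general m p hp rbar hpos hroot
end

section
/- Let m > 0, r̄ the unique positive root of 32 m^3 - 16 m^2 r - r^3, and p, q as in the Schwarzschild conformal embedding. Then the function r ↦ p(r)/q(r) extends continuously to r = r̄; i.e., the limit of p(r)/q(r) as r → r̄ exists and is finite. -/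
open Real Filter

/-- The integrand `p/q` of the Schwarzschild conformal embedding extends continuously
through the common root `r̄`: the limit of `p r / q r` as `r → r̄` exists and is finite. -/
theorem stmt_2 (m : ℝ) (hm : 0 < m)
    (p q : ℝ → ℝ)
    (hp : ∀ r, p r = 48 * m ^ 3 - 16 * m ^ 2 * r -
      r ^ ((3 : ℝ) / 2) * Real.sqrt (r ^ 3 + 2 * m * r ^ 2 + 4 * m ^ 2 * r + 72 * m ^ 3))
    (hq : ∀ r, q r = (32 * m ^ 3 - 16 * m ^ 2 * r - r ^ 3) * r)
    (rbar : ℝ) (hpos : 0 < rbar)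
    (hroot : 32 * m ^ 3 - 16 * m ^ 2 * rbar - rbar ^ 3 = 0) :
    ∃ L : ℝ, Tendsto (fun r => p r / q r) (nhdsWithin rbar {rbar}ᶜ) (nhds L) := by
  have hpf : p = fun r => 48 * m ^ 3 - 16 * m ^ 2 * r -
      r ^ ((3 : ℝ) / 2) * Real.sqrt (r ^ 3 + 2 * m * r ^ 2 + 4 * m ^ 2 * r + 72 * m ^ 3) :=
    funext hp
  have hqf : q = fun r => (32 * m ^ 3 - 16 * m ^ 2 * r - r ^ 3) * r := funext hq
  subst hpf hqf
  -- rbar < 2 m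
  have h2m : rbar < 2 * m := by nlinarith [pow_pos hpos 3]
  -- the argument of sqrt at rbar is positive
  have hApos : 0 < rbar ^ 3 + 2 * m * rbar ^ 2 + 4 * m ^ 2 * rbar + 72 * m ^ 3 := by positivity
  -- p rbar = 0
  have hrpow : rbar ^ ((3 : ℝ) / 2) = Real.sqrt (rbar ^ 3) := by
    rw [Real.sqrt_eq_rpow, show ((3 : ℝ) / 2) = (3 : ℝ) * (1 / 2) by ring,
      Real.rpow_mul hpos.le, show (3:ℝ) = ((3:ℕ):ℝ) by norm_num, Real.rpow_natCast]
  have hkey : rbar ^ 3 * (rbar ^ 3 + 2 * m * rbar ^ 2 + 4 * m ^ 2 * rbar + 72 * m ^ 3)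
      = (48 * m ^ 3 - 16 * m ^ 2 * rbar) ^ 2 := by
    linear_combination (-(rbar ^ 3) - 2 * m * rbar ^ 2 + 12 * m ^ 2 * rbar - 72 * m ^ 3) * hroot
  have hp0 : 48 * m ^ 3 - 16 * m ^ 2 * rbar -
      rbar ^ ((3 : ℝ) / 2) *
        Real.sqrt (rbar ^ 3 + 2 * m * rbar ^ 2 + 4 * m ^ 2 * rbar + 72 * m ^ 3) = 0 := by
    rw [hrpow, ← Real.sqrt_mul (by positivity) , hkey,
      Real.sqrt_sq (by nlinarith)]
    ring
  have hq0 : (32 * m ^ 3 - 16 * m ^ 2 * rbar - rbar ^ 3) * rbar = 0 := by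
    rw [hroot]; ring
  -- derivative of q
  have hq' : HasDerivAt (fun r => (32 * m ^ 3 - 16 * m ^ 2 * r - r ^ 3) * r)
      ((-(16 * m ^ 2) - 3 * rbar ^ 2) * rbar + (32 * m ^ 3 - 16 * m ^ 2 * rbar - rbar ^ 3) * 1)
      rbar := by
    have h1 : HasDerivAt (fun r : ℝ => 32 * m ^ 3 - 16 * m ^ 2 * r - r ^ 3)
        (-(16 * m ^ 2) - 3 * rbar ^ 2) rbar := by
      have := ((hasDerivAt_const rbar (32 * m ^ 3)).sub
        ((hasDerivAt_id rbar).const_mul (16 * m ^ 2))).sub (hasDerivAt_pow 3 rbar)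
      exact this.congr_deriv (by norm_num)
    exact h1.mul (hasDerivAt_id rbar)
  -- derivative of p
  have hA : HasDerivAt (fun r : ℝ => r ^ 3 + 2 * m * r ^ 2 + 4 * m ^ 2 * r + 72 * m ^ 3)
      (3 * rbar ^ 2 + 2 * m * (2 * rbar) + 4 * m ^ 2) rbar := by
    have := (((hasDerivAt_pow 3 rbar).add ((hasDerivAt_pow 2 rbar).const_mul (2 * m))).add
      ((hasDerivAt_id rbar).const_mul (4 * m ^ 2))).add_const (72 * m ^ 3)
    exact this.congr_deriv (by norm_num)
  have hsqrtA : HasDerivAt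
      (fun r : ℝ => Real.sqrt (r ^ 3 + 2 * m * r ^ 2 + 4 * m ^ 2 * r + 72 * m ^ 3))
      ((3 * rbar ^ 2 + 2 * m * (2 * rbar) + 4 * m ^ 2) /
        (2 * Real.sqrt (rbar ^ 3 + 2 * m * rbar ^ 2 + 4 * m ^ 2 * rbar + 72 * m ^ 3))) rbar :=
    hA.sqrt hApos.ne'
  have hrp : HasDerivAt (fun r : ℝ => r ^ ((3 : ℝ) / 2))
      (((3 : ℝ) / 2) * rbar ^ ((3 : ℝ) / 2 - 1)) rbar :=
    Real.hasDerivAt_rpow_const (Or.inl hpos.ne')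
  set P' : ℝ := (0 - 16 * m ^ 2 * 1) -
      (((3 : ℝ) / 2) * rbar ^ ((3 : ℝ) / 2 - 1) *
        Real.sqrt (rbar ^ 3 + 2 * m * rbar ^ 2 + 4 * m ^ 2 * rbar + 72 * m ^ 3) +
      rbar ^ ((3 : ℝ) / 2) *
        ((3 * rbar ^ 2 + 2 * m * (2 * rbar) + 4 * m ^ 2) /
        (2 * Real.sqrt (rbar ^ 3 + 2 * m * rbar ^ 2 + 4 * m ^ 2 * rbar + 72 * m ^ 3)))) with hP'
  have hp' : HasDerivAt (fun r => 48 * m ^ 3 - 16 * m ^ 2 * r -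
      r ^ ((3 : ℝ) / 2) * Real.sqrt (r ^ 3 + 2 * m * r ^ 2 + 4 * m ^ 2 * r + 72 * m ^ 3))
      P' rbar := by
    have h1 : HasDerivAt (fun r : ℝ => 48 * m ^ 3 - 16 * m ^ 2 * r) (0 - 16 * m ^ 2 * 1) rbar :=
      (hasDerivAt_const rbar (48 * m ^ 3)).sub ((hasDerivAt_id rbar).const_mul (16 * m ^ 2))
    exact h1.sub (hrp.mul hsqrtA)
  set Q' : ℝ := (-(16 * m ^ 2) - 3 * rbar ^ 2) * rbar +
      (32 * m ^ 3 - 16 * m ^ 2 * rbar - rbar ^ 3) * 1 with hQ'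
  have hQ'ne : Q' ≠ 0 := by
    rw [hQ', hroot]
    nlinarith [sq_nonneg rbar]
  refine ⟨P' / Q', ?_⟩
  have hsp := hasDerivAt_iff_tendsto_slope.mp hp'
  have hsq := hasDerivAt_iff_tendsto_slope.mp hq'
  have htend := hsp.div hsq hQ'ne
  refine htend.congr' ?_
  filter_upwards [self_mem_nhdsWithin] with r hr
  have hc : r - rbar ≠ 0 := sub_ne_zero.mpr hr
  rw [Pi.div_apply, slope_def_field, slope_def_field, hp0, hq0, sub_zero, sub_zero, div_div_div_comm,
    div_self hc, div_one]
end

section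
/- For m > 0 and p, q as in the Schwarzschild conformal embedding, as r → 0+ one has p(r)/q(r) = 3/(2r) + 1/(4m) + O(√r). Consequently, if h(r) = exp(∫ p/q dr) with suitable normalization, then h(r)/r^{3/2} tends to a positive constant as r → 0+. -/
open Real Filter Set

set_option maxHeartbeats 1000000 in
theorem part1 (m : ℝ) (hm : 0 < m)
    (p q : ℝ → ℝ)
    (hp : ∀ r, p r = 48 * m ^ 3 - 16 * m ^ 2 * r -
      r ^ ((3 : ℝ) / 2) * Real.sqrt (r ^ 3 + 2 * m * r ^ 2 + 4 * m ^ 2 * r + 72 * m ^ 3))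
    (hq : ∀ r, q r = (32 * m ^ 3 - 16 * m ^ 2 * r - r ^ 3) * r) :
    ∀ r ∈ Ioo (0 : ℝ) m,
        |p r / q r - 3 / (2 * r) - 1 / (4 * m)| ≤ (59 * Real.sqrt m / (60 * m ^ 2)) * Real.sqrt r := by
  intro r hr
  obtain ⟨hr0, hrm⟩ := hr
  obtain ⟨u, hu_def⟩ : ∃ u, u = Real.sqrt r := ⟨_, rfl⟩
  obtain ⟨v, hv_def⟩ : ∃ v, v = Real.sqrt m := ⟨_, rfl⟩
  have hu0 : 0 < u := hu_def ▸ Real.sqrt_pos.mpr hr0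
  have hv0 : 0 < v := hv_def ▸ Real.sqrt_pos.mpr hm
  have hu2 : u ^ 2 = r := by rw [hu_def]; exact Real.sq_sqrt hr0.le
  have hv2 : v ^ 2 = m := by rw [hv_def]; exact Real.sq_sqrt hm.le
  have huv : u ≤ v := by rw [hu_def, hv_def]; exact Real.sqrt_le_sqrt hrm.le
  have hrm2 : r ^ 2 ≤ m ^ 2 := by nlinarith
  have hrm3 : r ^ 3 ≤ m ^ 3 := by nlinarith
  obtain ⟨s, hs_def⟩ : ∃ s, s = Real.sqrt (r ^ 3 + 2 * m * r ^ 2 + 4 * m ^ 2 * r + 72 * m ^ 3) :=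
    ⟨_, rfl⟩
  have hs0 : 0 ≤ s := hs_def ▸ Real.sqrt_nonneg _
  have hS : s ^ 2 = r ^ 3 + 2 * m * r ^ 2 + 4 * m ^ 2 * r + 72 * m ^ 3 := by
    rw [hs_def]; apply Real.sq_sqrt; nlinarith
  have hS79 : s ^ 2 ≤ 79 * m ^ 3 := by
    have a1 : 2 * m * r ^ 2 ≤ 2 * m * m ^ 2 := by nlinarith
    have a2 : 4 * m ^ 2 * r ≤ 4 * m ^ 2 * m := by nlinarith
    nlinarith
  have hs9 : s ≤ 9 * m * v := by
    nlinarith [sq_nonneg (s - 9 * m * v), mul_pos hm hv0, mul_nonneg (mul_nonneg hm.le hv0.le) hs0]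
  have hQ : 15 * m ^ 3 ≤ 32 * m ^ 3 - 16 * m ^ 2 * r - r ^ 3 := by
    have a1 : 16 * m ^ 2 * r ≤ 16 * m ^ 2 * m := by nlinarith
    nlinarith
  have hQ0 : 0 < 32 * m ^ 3 - 16 * m ^ 2 * r - r ^ 3 := by nlinarith [pow_pos hm 3]
  have ht : r ^ ((3 : ℝ) / 2) = r * u := by
    rw [hu_def, Real.sqrt_eq_rpow, show ((3:ℝ)/2) = 1 + 1/2 by norm_num,
      Real.rpow_add hr0, Real.rpow_one]
  have hkey : p r / q r - 3 / (2 * r) - 1 / (4 * m)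
      = (16 * m ^ 2 * r ^ 2 + 6 * m * r ^ 3 + r ^ 4 - 4 * m * (r * u) * s) /
        (4 * m * ((32 * m ^ 3 - 16 * m ^ 2 * r - r ^ 3) * r)) := by
    rw [hp, hq, ht, ← hs_def]
    rw [div_sub_div _ _ (by positivity) (by positivity), div_sub_div _ _ (by positivity) (by positivity), div_eq_div_iff (by positivity) (by positivity)]
    ring
  have hD0 : 0 < 4 * m * ((32 * m ^ 3 - 16 * m ^ 2 * r - r ^ 3) * r) := by positivity
  have hNb : |16 * m ^ 2 * r ^ 2 + 6 * m * r ^ 3 + r ^ 4 - 4 * m * (r * u) * s|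
      ≤ 59 * m ^ 2 * v * (r * u) := by
    have h1 : 4 * m * (r * u) * s ≤ 4 * m * (r * u) * (9 * m * v) :=
      mul_le_mul_of_nonneg_left hs9 (by positivity)
    have e1 : 6 * m * r ^ 3 ≤ 6 * m ^ 2 * r ^ 2 := by nlinarith [mul_pos (mul_pos hm hr0) hr0]
    have e2 : r ^ 4 ≤ m ^ 2 * r ^ 2 := by nlinarith [mul_nonneg (sub_nonneg.mpr hrm2) (sq_nonneg r)]
    have e3 : m ^ 2 * r ^ 2 ≤ m ^ 2 * (r * u) * v := by
      have h' : m ^ 2 * r ^ 2 = m ^ 2 * (r * u) * u := by rw [← hu2]; ring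
      rw [h']
      exact mul_le_mul_of_nonneg_left huv (by positivity)
    have e4 : (0:ℝ) ≤ 4 * m * (r * u) * s := by positivity
    have p1 : (0:ℝ) ≤ 16 * m ^ 2 * r ^ 2 := by positivity
    have p2 : (0:ℝ) ≤ 6 * m * r ^ 3 := by positivity
    have p3 : (0:ℝ) ≤ r ^ 4 := by positivity
    have p4 : (0:ℝ) ≤ m ^ 2 * (r * u) * v := by positivity
    rw [abs_le]
    constructor
    · linarith
    · linarith
  have hD60 : 60 * m ^ 4 * r ≤ 4 * m * ((32 * m ^ 3 - 16 * m ^ 2 * r - r ^ 3) * r) := by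
    have a1 : (0:ℝ) ≤ 4 * m * r := by positivity
    nlinarith [mul_le_mul_of_nonneg_left hQ a1]
  rw [← hu_def, ← hv_def, hkey, abs_div, abs_of_pos hD0]
  calc |16 * m ^ 2 * r ^ 2 + 6 * m * r ^ 3 + r ^ 4 - 4 * m * (r * u) * s| /
        (4 * m * ((32 * m ^ 3 - 16 * m ^ 2 * r - r ^ 3) * r))
      ≤ (59 * m ^ 2 * v * (r * u)) / (60 * m ^ 4 * r) :=
        div_le_div₀ (by positivity) hNb (by positivity) hD60
    _ = (59 * v / (60 * m ^ 2)) * u := by field_simp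


set_option maxHeartbeats 1000000 in
theorem part2 (m : ℝ) (hm : 0 < m) (p q : ℝ → ℝ) (C : ℝ) (hC : 0 ≤ C)
    (key : ∀ r ∈ Ioo (0:ℝ) m, |p r / q r - 3 / (2 * r) - 1 / (4 * m)| ≤ C * Real.sqrt r)
    (δ₀ : ℝ) (hδ₀ : 0 < δ₀) (h : ℝ → ℝ)
    (hd : ∀ r ∈ Ioo (0:ℝ) δ₀, HasDerivAt h (p r / q r * h r) r)
    (hpos : ∀ r ∈ Ioo (0:ℝ) δ₀, 0 < h r) :
    ∃ c > 0, Tendsto (fun r => h r / r ^ ((3 : ℝ) / 2)) (nhdsWithin 0 (Ioi 0)) (nhds c) := by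
  set δ := min δ₀ m with hδ_def
  have hδ : 0 < δ := lt_min hδ₀ hm
  set E : ℝ → ℝ := fun r => p r / q r - 3 / (2 * r) - 1 / (4 * m) with hE_def
  set L : ℝ → ℝ := fun r => Real.log (h r) - 3/2 * Real.log r - r / (4 * m) with hL_def
  have hsub : Ioo (0:ℝ) δ ⊆ Ioo 0 δ₀ := Ioo_subset_Ioo le_rfl (min_le_left _ _)
  have hsubm : Ioo (0:ℝ) δ ⊆ Ioo 0 m := Ioo_subset_Ioo le_rfl (min_le_right _ _)
  have hL : ∀ r ∈ Ioo (0:ℝ) δ, HasDerivAt L (E r) r := by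
    intro r hr
    have h1 : HasDerivAt (fun x => Real.log (h x)) ((p r / q r * h r) / h r) r :=
      (hd r (hsub hr)).log (hpos r (hsub hr)).ne'
    have h2 : HasDerivAt (fun x : ℝ => 3/2 * Real.log x) (3/2 * r⁻¹) r :=
      (Real.hasDerivAt_log hr.1.ne').const_mul (3/2)
    have h3 : HasDerivAt (fun x : ℝ => x / (4 * m)) (1 / (4 * m)) r :=
      (hasDerivAt_id r).div_const _
    have := (h1.sub h2).sub h3
    refine this.congr_deriv ?_
    have hh : h r ≠ 0 := (hpos r (hsub hr)).ne'
    rw [hE_def]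
    dsimp only
    rw [mul_div_assoc, div_self hh, mul_one]
    ring
  have hM : ∀ r ∈ Ioo (0:ℝ) δ,
      HasDerivAt (fun x => L x + (2*C/3) * x ^ ((3:ℝ)/2)) (E r + C * Real.sqrt r) r := by
    intro r hr
    have h4 : HasDerivAt (fun x : ℝ => x ^ ((3:ℝ)/2)) ((3:ℝ)/2 * r ^ ((3:ℝ)/2 - 1)) r :=
      Real.hasDerivAt_rpow_const (Or.inl hr.1.ne')
    have := (hL r hr).add (h4.const_mul (2*C/3))
    refine this.congr_deriv ?_
    rw [show ((3:ℝ)/2 - 1) = 1/2 by norm_num, ← Real.sqrt_eq_rpow]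
    ring
  have hW : ∀ r ∈ Ioo (0:ℝ) δ,
      HasDerivAt (fun x => L x - (2*C/3) * x ^ ((3:ℝ)/2)) (E r - C * Real.sqrt r) r := by
    intro r hr
    have h4 : HasDerivAt (fun x : ℝ => x ^ ((3:ℝ)/2)) ((3:ℝ)/2 * r ^ ((3:ℝ)/2 - 1)) r :=
      Real.hasDerivAt_rpow_const (Or.inl hr.1.ne')
    have := (hL r hr).sub (h4.const_mul (2*C/3))
    refine this.congr_deriv ?_
    rw [show ((3:ℝ)/2 - 1) = 1/2 by norm_num, ← Real.sqrt_eq_rpow]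
    ring
  have hEbound : ∀ r ∈ Ioo (0:ℝ) δ, |E r| ≤ C * Real.sqrt r := fun r hr => key r (hsubm hr)
  have hMmono : MonotoneOn (fun x => L x + (2*C/3) * x ^ ((3:ℝ)/2)) (Ioo 0 δ) := by
    apply monotoneOn_of_hasDerivWithinAt_nonneg (convex_Ioo _ _)
      (fun r hr => (hM r hr).continuousAt.continuousWithinAt)
      (f' := fun r => E r + C * Real.sqrt r)
    · rw [interior_Ioo]; exact fun r hr => (hM r hr).hasDerivWithinAt
    · rw [interior_Ioo]; intro r hr
      have := hEbound r hr
      have := neg_abs_le (E r)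
      linarith
  have hWanti : AntitoneOn (fun x => L x - (2*C/3) * x ^ ((3:ℝ)/2)) (Ioo 0 δ) := by
    apply antitoneOn_of_hasDerivWithinAt_nonpos (convex_Ioo _ _)
      (fun r hr => (hW r hr).continuousAt.continuousWithinAt)
      (f' := fun r => E r - C * Real.sqrt r)
    · rw [interior_Ioo]; exact fun r hr => (hW r hr).hasDerivWithinAt
    · rw [interior_Ioo]; intro r hr
      have := hEbound r hr
      have := le_abs_self (E r)
      linarith
  set r₀ := δ/2 with hr₀_def
  have hr₀mem : r₀ ∈ Ioo (0:ℝ) δ := ⟨by rw [hr₀_def]; linarith, by rw [hr₀_def]; linarith⟩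
  have hne : (Ioo (0:ℝ) δ).Nonempty := ⟨r₀, hr₀mem⟩
  set M : ℝ → ℝ := fun x => L x + (2*C/3) * x ^ ((3:ℝ)/2) with hM_def
  set W : ℝ → ℝ := fun x => L x - (2*C/3) * x ^ ((3:ℝ)/2) with hW_def
  have hbdd : BddBelow (M '' Ioo 0 δ) := by
    refine ⟨min (W r₀) (M r₀), ?_⟩
    rintro _ ⟨r, hr, rfl⟩
    rcases le_total r r₀ with hc1 | hc1
    · have hWr : W r₀ ≤ W r := hWanti hr hr₀mem hc1
      have hx : (0:ℝ) ≤ (2*C/3) * r ^ ((3:ℝ)/2) :=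
        mul_nonneg (by linarith) (Real.rpow_nonneg hr.1.le _)
      have : W r ≤ M r := by rw [hM_def, hW_def]; dsimp; linarith
      calc min (W r₀) (M r₀) ≤ W r₀ := min_le_left _ _
        _ ≤ W r := hWr
        _ ≤ M r := this
    · calc min (W r₀) (M r₀) ≤ M r₀ := min_le_right _ _
        _ ≤ M r := hMmono hr₀mem hr hc1
  have htendM : Tendsto M (nhdsWithin 0 (Ioi 0)) (nhds (sInf (M '' Ioo 0 δ))) :=
    MonotoneOn.tendsto_nhdsWithin_Ioo_right hne hMmono hbdd
  set ℓ := sInf (M '' Ioo 0 δ) with hℓ_def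
  refine ⟨Real.exp ℓ, Real.exp_pos _, ?_⟩
  have htend32 : Tendsto (fun r : ℝ => r ^ ((3:ℝ)/2)) (nhdsWithin 0 (Ioi 0)) (nhds 0) := by
    have hc : ContinuousAt (fun r : ℝ => r ^ ((3:ℝ)/2)) 0 :=
      Real.continuousAt_rpow_const 0 _ (Or.inr (by norm_num))
    have := hc.tendsto.mono_left (nhdsWithin_le_nhds (s := Ioi (0:ℝ)))
    rwa [Real.zero_rpow (by norm_num : ((3:ℝ)/2) ≠ 0)] at this
  have htendr : Tendsto (fun r : ℝ => r / (4 * m)) (nhdsWithin 0 (Ioi 0)) (nhds 0) := by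
    have : Tendsto (fun r : ℝ => r / (4 * m)) (nhds 0) (nhds (0 / (4 * m))) :=
      (continuous_id.div_const _).tendsto 0
    rw [zero_div] at this
    exact this.mono_left (nhdsWithin_le_nhds (s := Ioi (0:ℝ)))
  have hcomb : Tendsto (fun r => M r - (2*C/3) * r ^ ((3:ℝ)/2) + r / (4 * m))
      (nhdsWithin 0 (Ioi 0)) (nhds ℓ) := by
    have := (htendM.sub ((htend32.const_mul (2*C/3)))).add htendr
    simpa using this
  have hfinal := (Real.continuous_exp.tendsto _).comp hcomb
  apply hfinal.congr'
  filter_upwards [Ioo_mem_nhdsGT_of_mem (show (0:ℝ) ∈ Ico 0 δ from ⟨le_rfl, hδ⟩)] with r hr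
  have hr0 : 0 < r := hr.1
  have hh : 0 < h r := hpos r (hsub hr)
  show Real.exp (M r - (2*C/3) * r ^ ((3:ℝ)/2) + r / (4 * m)) = h r / r ^ ((3:ℝ)/2)
  have hMr : M r - (2*C/3) * r ^ ((3:ℝ)/2) + r / (4 * m)
      = Real.log (h r) - 3/2 * Real.log r := by
    rw [hM_def, hL_def]; dsimp; ring
  rw [hMr]
  rw [show Real.log (h r) - 3/2 * Real.log r = Real.log (h r) - Real.log r * (3/2) by ring]
  rw [Real.exp_sub, Real.exp_log hh, ← Real.rpow_def_of_pos hr0]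


set_option maxHeartbeats 1000000 in
/-- Near `r = 0` one has `p r / q r = 3/(2r) + 1/(4m) + O(√r)`; consequently any positive
solution `h` of `h' = (p/q) h` near `0` satisfies `h r / r^{3/2} → c > 0` as `r → 0⁺`. -/
theorem stmt_3 (m : ℝ) (hm : 0 < m)
    (p q : ℝ → ℝ)
    (hp : ∀ r, p r = 48 * m ^ 3 - 16 * m ^ 2 * r -
      r ^ ((3 : ℝ) / 2) * Real.sqrt (r ^ 3 + 2 * m * r ^ 2 + 4 * m ^ 2 * r + 72 * m ^ 3))
    (hq : ∀ r, q r = (32 * m ^ 3 - 16 * m ^ 2 * r - r ^ 3) * r) :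
    (∃ δ > 0, ∃ C : ℝ, ∀ r ∈ Ioo (0 : ℝ) δ,
        |p r / q r - 3 / (2 * r) - 1 / (4 * m)| ≤ C * Real.sqrt r) ∧
      ∀ δ₀ > 0, ∀ h : ℝ → ℝ, (∀ r ∈ Ioo (0 : ℝ) δ₀, HasDerivAt h (p r / q r * h r) r) →
        (∀ r ∈ Ioo (0 : ℝ) δ₀, 0 < h r) →
        ∃ c > 0, Tendsto (fun r => h r / r ^ ((3 : ℝ) / 2)) (nhdsWithin 0 (Ioi 0)) (nhds c) := by
  have key := part1 m hm p q hp hq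
  constructor
  · exact ⟨m, hm, 59 * Real.sqrt m / (60 * m ^ 2), key⟩
  · intro δ₀ hδ₀ h hd hpos
    exact part2 m hm p q _ (by positivity) key δ₀ hδ₀ h hd hpos
end

section
/- Let V, h, f be smooth functions of r with f(r) = h(r)√(V(r))/(a r) and a ≠ 0 a constant, and define T = sinh(t a) f(r), X = cosh(t a) f(r), R = h(r) on a region where V > 0. Then the pullback of the metric (dR² + dX² - dT²)/R² equals (V^{-1} dr² - V dt²)/r² if and only if h satisfies the first-order ODE h'/h = [V(2V - rV') ± a r √(V(4V + 4 a² r² - (2V - rV')²))] / [2 r V (a² r² + V)]. -/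
open Real

private lemma cancel_aux {k x : ℝ} (hk : k ≠ 0) (hkx : k * x = 0) : x = 0 :=
  (mul_eq_zero.mp hkx).resolve_left hk

lemma quad_aux (a r V D hv u fp sq : ℝ) (ha : a ≠ 0) (hr : 0 < r) (hV : 0 < V)
    (hh : 0 < hv) (hsq2 : sq ^ 2 = V * (4*V + 4*a^2*r^2 - (2*V - r*D)^2))
    (hfp : fp ^ 2 * (4*a^2*r^4*V) = (2*u*V*r - hv*(2*V - r*D))^2) :
    (u^2 + fp^2) * (V * r^2) = hv^2 ↔
      (u / hv = (V*(2*V - r*D) + a*r*sq) / (2*r*V*(a^2*r^2 + V)) ∨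
       u / hv = (V*(2*V - r*D) - a*r*sq) / (2*r*V*(a^2*r^2 + V))) := by
  have hden : (2*r*V*(a^2*r^2 + V)) ≠ 0 := by positivity
  have e1 : (u^2 + fp^2) * (V * r^2) = hv^2 ↔
      4*a^2*r^4*V*u^2 + (2*u*V*r - hv*(2*V - r*D))^2 = 4*a^2*r^2*hv^2 := by
    constructor <;> intro H
    · linear_combination (4*a^2*r^2) * H - hfp
    · have h0 : (4*a^2*r^2) * ((u^2 + fp^2) * (V * r^2) - hv^2) = 0 := by
        linear_combination H + hfp
      have := cancel_aux (by positivity) h0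
      linarith
  have e2 : (4*a^2*r^4*V*u^2 + (2*u*V*r - hv*(2*V - r*D))^2 = 4*a^2*r^2*hv^2) ↔
      (8*r^2*V*(a^2*r^2+V)*u - 4*V*r*(2*V - r*D)*hv)^2 = (4*a*r^2*hv*sq)^2 := by
    constructor <;> intro H
    · linear_combination (16*r^2*V*(a^2*r^2+V)) * H - (16*a^2*r^4*hv^2) * hsq2
    · have h0 : (16*r^2*V*(a^2*r^2+V)) *
          ((4*a^2*r^4*V*u^2 + (2*u*V*r - hv*(2*V - r*D))^2) - 4*a^2*r^2*hv^2) = 0 := by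
        linear_combination H + (16*a^2*r^4*hv^2) * hsq2
      have := cancel_aux (show (16*r^2*V*(a^2*r^2+V)) ≠ 0 by positivity) h0
      linarith
  rw [e1, e2, sq_eq_sq_iff_eq_or_eq_neg]
  have lin : ∀ c : ℝ,
      (8*r^2*V*(a^2*r^2+V)*u - 4*V*r*(2*V - r*D)*hv = 4*a*r^2*hv*c) ↔
      u / hv = (V*(2*V - r*D) + a*r*c) / (2*r*V*(a^2*r^2 + V)) := by
    intro c
    rw [div_eq_div_iff hh.ne' hden]
    constructor <;> intro H
    · have h0 : (4*r) * (u * (2*r*V*(a^2*r^2 + V)) - (V*(2*V - r*D) + a*r*c) * hv) = 0 := by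
        linear_combination H
      have := cancel_aux (show (4*r) ≠ 0 by positivity) h0
      linarith
    · linear_combination (4*r) * H
  constructor <;> rintro (H | H)
  · exact Or.inl ((lin sq).mp H)
  · refine Or.inr ?_
    have := (lin (-sq)).mp (by linear_combination H)
    rw [this]; ring_nf
  · exact Or.inl ((lin sq).mpr H)
  · refine Or.inr ?_
    have := (lin (-sq)).mpr (by rw [H]; ring_nf)
    linear_combination this

/-- The map `(t,r) ↦ (T,X,R) = (sinh(ta) f, cosh(ta) f, h)` with `f = h√V/(ar)` pulls the
AdS₃ metric `(dR² + dX² - dT²)/R²` back to `g₂ = (V⁻¹dr² - V dt²)/r²` if and only if `h`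
satisfies the first-order ODE
`h'/h = [V(2V - rV') ± a r √(V(4V + 4a²r² - (2V - rV')²))] / [2rV(a²r² + V)]`. -/
theorem stmt_5 (a : ℝ) (ha : a ≠ 0) (V h f : ℝ → ℝ)
    (hf : ∀ r, f r = h r * Real.sqrt (V r) / (a * r))
    (r : ℝ) (hr : 0 < r) (hVpos : 0 < V r) (hhpos : 0 < h r)
    (hVd : DifferentiableAt ℝ V r) (hhd : DifferentiableAt ℝ h r)
    (hrad : 0 ≤ V r * (4 * V r + 4 * a ^ 2 * r ^ 2 - (2 * V r - r * deriv V r) ^ 2)) :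
    -- pullback of (dR² + dX² - dT²)/R² equals (V⁻¹dr² - V dt²)/r² at radius r ...
    (∀ t dt dr : ℝ,
        ((deriv h r * dr) ^ 2
          + (a * Real.sinh (t * a) * f r * dt + Real.cosh (t * a) * deriv f r * dr) ^ 2
          - (a * Real.cosh (t * a) * f r * dt + Real.sinh (t * a) * deriv f r * dr) ^ 2)
          / (h r) ^ 2
        = ((V r)⁻¹ * dr ^ 2 - V r * dt ^ 2) / r ^ 2)
    ↔ -- ... iff h satisfies the ODE (for one of the two signs)
    (deriv h r / h r =
        (V r * (2 * V r - r * deriv V r) +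
          a * r * Real.sqrt (V r *
            (4 * V r + 4 * a ^ 2 * r ^ 2 - (2 * V r - r * deriv V r) ^ 2))) /
        (2 * r * V r * (a ^ 2 * r ^ 2 + V r)) ∨
      deriv h r / h r =
        (V r * (2 * V r - r * deriv V r) -
          a * r * Real.sqrt (V r *
            (4 * V r + 4 * a ^ 2 * r ^ 2 - (2 * V r - r * deriv V r) ^ 2))) /
        (2 * r * V r * (a ^ 2 * r ^ 2 + V r))) := by
  set s := Real.sqrt (V r) with hs_def
  have hs : 0 < s := Real.sqrt_pos.2 hVpos
  have hs2 : s ^ 2 = V r := Real.sq_sqrt hVpos.le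
  have hfe : f = fun y => h y * Real.sqrt (V y) / (a * y) := funext hf
  have hder : HasDerivAt (fun y => h y * Real.sqrt (V y) / (a * y))
      (((deriv h r * Real.sqrt (V r) + h r * (deriv V r / (2 * Real.sqrt (V r)))) * (a * r)
        - h r * Real.sqrt (V r) * (a * 1)) / (a * r) ^ 2) r :=
    (hhd.hasDerivAt.mul (hVd.hasDerivAt.sqrt hVpos.ne')).div
      ((hasDerivAt_id r).const_mul a) (mul_ne_zero ha hr.ne')
  have hdf : deriv f r = ((deriv h r * s + h r * (deriv V r / (2 * s))) * (a * r)
        - h r * s * (a * 1)) / (a * r) ^ 2 := by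
    rw [hfe]; exact hder.deriv
  have hlin : deriv f r * (2 * a * r ^ 2 * s) =
      2 * deriv h r * V r * r - h r * (2 * V r - r * deriv V r) := by
    rw [hdf]
    field_simp
    linear_combination (2*deriv h r*r - 2*h r) * hs2
  have hfp : (deriv f r) ^ 2 * (4*a^2*r^4*V r) =
      (2*deriv h r*V r*r - h r*(2*V r - r*deriv V r))^2 := by
    linear_combination (deriv f r*(2*a*r^2*s)
        + (2*deriv h r*V r*r - h r*(2*V r - r*deriv V r))) * hlin
      - (4*a^2*r^4*(deriv f r)^2) * hs2
  have hsq2 : (Real.sqrt (V r * (4 * V r + 4 * a ^ 2 * r ^ 2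
      - (2 * V r - r * deriv V r) ^ 2))) ^ 2
      = V r * (4 * V r + 4 * a ^ 2 * r ^ 2 - (2 * V r - r * deriv V r) ^ 2) :=
    Real.sq_sqrt hrad
  have key := quad_aux a r (V r) (deriv V r) (h r) (deriv h r) (deriv f r)
    (Real.sqrt (V r * (4 * V r + 4 * a ^ 2 * r ^ 2 - (2 * V r - r * deriv V r) ^ 2)))
    ha hr hVpos hhpos hsq2 hfp
  have hF2 : (a * f r) ^ 2 = h r ^ 2 * V r / r ^ 2 := by
    rw [hf r]
    field_simp
    linear_combination hs2
  constructor
  · intro H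
    have H1 := H 0 0 1
    simp only [Real.sinh_zero, Real.cosh_zero, mul_zero, zero_mul, mul_one, one_mul,
      add_zero, zero_add, sub_zero, one_pow] at H1
    have Hc : ((deriv h r)^2 + (deriv f r)^2) * (V r * r^2) = h r ^2 := by
      field_simp at H1
      linear_combination H1
    have := key.mp Hc
    convert this using 3 <;> ring
  · intro hode t dt dr
    have Hc : ((deriv h r)^2 + (deriv f r)^2) * (V r * r^2) = h r ^2 :=
      key.mpr (by convert hode using 3 <;> ring)
    have hexp : (deriv h r * dr) ^ 2
          + (a * Real.sinh (t * a) * f r * dt + Real.cosh (t * a) * deriv f r * dr) ^ 2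
          - (a * Real.cosh (t * a) * f r * dt + Real.sinh (t * a) * deriv f r * dr) ^ 2
        = ((deriv h r)^2 + (deriv f r)^2) * dr^2 - (a * f r)^2 * dt^2 := by
      linear_combination ((deriv f r)^2*dr^2 - (a*f r)^2*dt^2) * Real.cosh_sq_sub_sinh_sq (t*a)
    rw [hexp, hF2]
    field_simp
    linear_combination (dr^2) * Hc
end

section
/- Let g = V dt² - V^{-1} dr² - r²(dθ² + sin²θ dφ²) with V = V(r) > 0, and suppose (T, X, R) = (sinh(ta) f, cosh(ta) f, h) with f = h√V/(ar) gives an isometric embedding of r^{-2}(V^{-1}dr² - V dt²) into (dR² + dX² - dT²)/R². Then the map ι(t, r, θ, φ) = (T, X, R sinθ sinφ, R sinθ cosφ, R cosθ) into ℝ^{4,1} with metric dT² - dX² - dX₂² - dX₃² - dX₄² satisfies ι*(η) = Ω² g with Ω = h(r)/r. -/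
/-! In spherical coordinates the flat spatial part of `η` pulls back to `dR² + R² dΩ²`, so
`ι*η` is the two-dimensional form `dT² - dX² - dR²` minus `R² dΩ²`. The embedding hypothesis
turns the first into `(h/r)² (V dt² - V⁻¹ dr²)`, and `R² = h² = (h/r)² r²` does the rest. -/

theorem euclidean_lineElement_spherical (R R' dr θ φ dθ dφ : ℝ) :
    (R' * Real.sin θ * Real.sin φ * dr + R * Real.cos θ * Real.sin φ * dθ
        + R * Real.sin θ * Real.cos φ * dφ) ^ 2
      + (R' * Real.sin θ * Real.cos φ * dr + R * Real.cos θ * Real.cos φ * dθ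
        - R * Real.sin θ * Real.sin φ * dφ) ^ 2
      + (R' * Real.cos θ * dr - R * Real.sin θ * dθ) ^ 2
    = (R' * dr) ^ 2 + R ^ 2 * (dθ ^ 2 + Real.sin θ ^ 2 * dφ ^ 2) := by
  linear_combination
    ((R' * dr * Real.sin θ + R * Real.cos θ * dθ) ^ 2 + (R * Real.sin θ * dφ) ^ 2)
      * Real.sin_sq_add_cos_sq φ
    + ((R' * dr) ^ 2 + (R * dθ) ^ 2) * Real.sin_sq_add_cos_sq θ

theorem stmt_6_general (a : ℝ) (V h f : ℝ → ℝ)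
    -- hypothesis: the 2-dimensional isometric embedding condition into AdS₃
    (h2d : ∀ t r dt dr : ℝ, r ≠ 0 →
        (deriv h r * dr) ^ 2
          + (a * Real.sinh (t * a) * f r * dt + Real.cosh (t * a) * deriv f r * dr) ^ 2
          - (a * Real.cosh (t * a) * f r * dt + Real.sinh (t * a) * deriv f r * dr) ^ 2
        = (h r) ^ 2 / r ^ 2 * ((V r)⁻¹ * dr ^ 2 - V r * dt ^ 2)) :
    -- conclusion: the flat quadratic form η pulled back along ι equals Ω² g
    ∀ t r θ φ dt dr dθ dφ : ℝ, r ≠ 0 →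
      (a * Real.cosh (t * a) * f r * dt + Real.sinh (t * a) * deriv f r * dr) ^ 2
        - (a * Real.sinh (t * a) * f r * dt + Real.cosh (t * a) * deriv f r * dr) ^ 2
        - (deriv h r * Real.sin θ * Real.sin φ * dr + h r * Real.cos θ * Real.sin φ * dθ
            + h r * Real.sin θ * Real.cos φ * dφ) ^ 2
        - (deriv h r * Real.sin θ * Real.cos φ * dr + h r * Real.cos θ * Real.cos φ * dθ
            - h r * Real.sin θ * Real.sin φ * dφ) ^ 2
        - (deriv h r * Real.cos θ * dr - h r * Real.sin θ * dθ) ^ 2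
      = (h r / r) ^ 2 *
          (V r * dt ^ 2 - (V r)⁻¹ * dr ^ 2
            - r ^ 2 * (dθ ^ 2 + (Real.sin θ) ^ 2 * dφ ^ 2)) := by
  intro t r θ φ dt dr dθ dφ hr
  have hR : (h r / r) ^ 2 * r ^ 2 = h r ^ 2 := by field_simp
  linear_combination -h2d t r dt dr hr
    - euclidean_lineElement_spherical (h r) (deriv h r) dr θ φ dθ dφ
    + (dθ ^ 2 + Real.sin θ ^ 2 * dφ ^ 2) * hR

/-- If `(T, X, R) = (sinh(ta) f, cosh(ta) f, h)` with `f = h√V/(ar)` isometrically embeds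
the 2-metric `r⁻²(V⁻¹dr² - V dt²)` into `(dR² + dX² - dT²)/R²`, then
`ι(t,r,θ,φ) = (T, X, R sinθ sinφ, R sinθ cosφ, R cosθ)` into `ℝ^{4,1}` satisfies
`ι*(η) = Ω² g` with `Ω = h(r)/r` and `g = V dt² - V⁻¹dr² - r²(dθ² + sin²θ dφ²)`. -/
theorem stmt_6 (a : ℝ) (V h f : ℝ → ℝ)
    (hf : ∀ r, f r = h r * Real.sqrt (V r) / (a * r))
    (hVpos : ∀ r, 0 < V r) (hhpos : ∀ r, 0 < h r)
    (hVd : Differentiable ℝ V) (hhd : Differentiable ℝ h)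
    -- hypothesis: the 2-dimensional isometric embedding condition into AdS₃
    (h2d : ∀ t r dt dr : ℝ, r ≠ 0 →
        (deriv h r * dr) ^ 2
          + (a * Real.sinh (t * a) * f r * dt + Real.cosh (t * a) * deriv f r * dr) ^ 2
          - (a * Real.cosh (t * a) * f r * dt + Real.sinh (t * a) * deriv f r * dr) ^ 2
        = (h r) ^ 2 / r ^ 2 * ((V r)⁻¹ * dr ^ 2 - V r * dt ^ 2)) :
    -- conclusion: the flat quadratic form η pulled back along ι equals Ω² g
    ∀ t r θ φ dt dr dθ dφ : ℝ, r ≠ 0 →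
      (a * Real.cosh (t * a) * f r * dt + Real.sinh (t * a) * deriv f r * dr) ^ 2
        - (a * Real.sinh (t * a) * f r * dt + Real.cosh (t * a) * deriv f r * dr) ^ 2
        - (deriv h r * Real.sin θ * Real.sin φ * dr + h r * Real.cos θ * Real.sin φ * dθ
            + h r * Real.sin θ * Real.cos φ * dφ) ^ 2
        - (deriv h r * Real.sin θ * Real.cos φ * dr + h r * Real.cos θ * Real.cos φ * dθ
            - h r * Real.sin θ * Real.sin φ * dφ) ^ 2
        - (deriv h r * Real.cos θ * dr - h r * Real.sin θ * dθ) ^ 2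
      = (h r / r) ^ 2 *
          (V r * dt ^ 2 - (V r)⁻¹ * dr ^ 2
            - r ^ 2 * (dθ ^ 2 + (Real.sin θ) ^ 2 * dφ ^ 2)) :=
  stmt_6_general a V h f h2d
end

section
/- For the Schwarzschild conformal embedding into ℝ^{4,1} with R = h(r), T = (4m/r) h √(1-2m/r) sinh(t/4m), X = (4m/r) h √(1-2m/r) cosh(t/4m) (for r ≥ 2m), one has T² - X² - R² = Ω² (32m³ - 16m²r - r³)/r where Ω = h/r. In particular the image of the hypersurface r = r̄ (the positive root of 32m³-16m²r-r³) lies on the light cone T² = X² + R² of the origin of ℝ^{4,1}. -/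
open Real

/-!
Both branches of the embedding have the form `(a √u sinh τ, a √u cosh τ, h)` up to swapping
the first two coordinates, with `a = 4mh/r` and `u = ±(1 - 2m/r) ≥ 0`. Since `cosh² - sinh² = 1`,
the time dependence drops out and in both cases `T² - X² = a² (2m/r - 1)`; subtracting `h²`
leaves a rational function of `r` whose numerator is the cubic `32m³ - 16m²r - r³`. At a root
`r̄` of the cubic the right-hand side vanishes, which is the light-cone equation.
-/

lemma sq_mul_cosh_sub_sq_mul_sinh (a x : ℝ) : (a * cosh x) ^ 2 - (a * sinh x) ^ 2 = a ^ 2 := by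
  rw [mul_pow, mul_pow, cosh_sq]
  ring

lemma schwarzschild_interval_eq (m r H : ℝ) (hr : r ≠ 0) :
    (4 * m / r * H) ^ 2 * (2 * m / r - 1) - H ^ 2
      = (H / r) ^ 2 * (32 * m ^ 3 - 16 * m ^ 2 * r - r ^ 3) / r := by
  field_simp
  ring

theorem stmt_7_general (m : ℝ) (hm : 0 < m) (h : ℝ → ℝ) :
    -- the identity outside the horizon
    (∀ r t : ℝ, 2 * m ≤ r →
      let T := 4 * m / r * h r * Real.sqrt (1 - 2 * m / r) * Real.sinh (t / (4 * m))
      let X := 4 * m / r * h r * Real.sqrt (1 - 2 * m / r) * Real.cosh (t / (4 * m))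
      let R := h r
      T ^ 2 - X ^ 2 - R ^ 2 = (h r / r) ^ 2 * (32 * m ^ 3 - 16 * m ^ 2 * r - r ^ 3) / r) ∧
    -- the identity inside the horizon
    (∀ r t : ℝ, 0 < r → r < 2 * m →
      let T := 4 * m / r * h r * Real.sqrt (2 * m / r - 1) * Real.cosh (t / (4 * m))
      let X := 4 * m / r * h r * Real.sqrt (2 * m / r - 1) * Real.sinh (t / (4 * m))
      let R := h r
      T ^ 2 - X ^ 2 - R ^ 2 = (h r / r) ^ 2 * (32 * m ^ 3 - 16 * m ^ 2 * r - r ^ 3) / r) ∧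
    -- the image of the hypersurface r = r̄ lies on the light cone of the origin
    ∀ rbar t : ℝ, 0 < rbar → rbar < 2 * m →
      32 * m ^ 3 - 16 * m ^ 2 * rbar - rbar ^ 3 = 0 →
      (4 * m / rbar * h rbar * Real.sqrt (2 * m / rbar - 1) * Real.cosh (t / (4 * m))) ^ 2
        = (4 * m / rbar * h rbar * Real.sqrt (2 * m / rbar - 1) * Real.sinh (t / (4 * m))) ^ 2
          + (h rbar) ^ 2 := by
  have inside : ∀ r t : ℝ, 0 < r → r < 2 * m →
      (4 * m / r * h r * √(2 * m / r - 1) * cosh (t / (4 * m))) ^ 2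
        - (4 * m / r * h r * √(2 * m / r - 1) * sinh (t / (4 * m))) ^ 2 - h r ^ 2
        = (h r / r) ^ 2 * (32 * m ^ 3 - 16 * m ^ 2 * r - r ^ 3) / r := by
    intro r t hr0 hr
    have hu : 0 ≤ 2 * m / r - 1 := by rw [sub_nonneg, le_div_iff₀ hr0]; linarith
    rw [← schwarzschild_interval_eq m r (h r) hr0.ne']
    linear_combination
      sq_mul_cosh_sub_sq_mul_sinh (4 * m / r * h r * √(2 * m / r - 1)) (t / (4 * m))
        + (4 * m / r * h r) ^ 2 * sq_sqrt hu
  refine ⟨fun r t hr => ?_, inside, fun rbar t hr0 hr hcubic => ?_⟩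
  · have hr0 : 0 < r := by linarith
    have hu : 0 ≤ 1 - 2 * m / r := by rw [sub_nonneg, div_le_one hr0]; exact hr
    show _ = _
    rw [← schwarzschild_interval_eq m r (h r) hr0.ne']
    linear_combination
      -sq_mul_cosh_sub_sq_mul_sinh (4 * m / r * h r * √(1 - 2 * m / r)) (t / (4 * m))
        - (4 * m / r * h r) ^ 2 * sq_sqrt hu
  · linear_combination inside rbar t hr0 hr + (h rbar / rbar) ^ 2 / rbar * hcubic

/-- For the Schwarzschild conformal embedding,
`T² - X² - R² = Ω² (32m³ - 16m²r - r³)/r` with `Ω = h/r` (outside the horizon, and the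
analogous identity for the inside branch); in particular the image of the hypersurface
`r = r̄` (the positive root of the cubic `32m³ - 16m²r - r³`, which satisfies `r̄ < 2m`)
lies on the light cone `T² = X² + R²` of the origin of `ℝ^{4,1}`. -/
theorem stmt_7 (m : ℝ) (hm : 0 < m) (h : ℝ → ℝ) (hh : ∀ r, 0 < h r) :
    -- the identity outside the horizon
    (∀ r t : ℝ, 2 * m ≤ r →
      let T := 4 * m / r * h r * Real.sqrt (1 - 2 * m / r) * Real.sinh (t / (4 * m))
      let X := 4 * m / r * h r * Real.sqrt (1 - 2 * m / r) * Real.cosh (t / (4 * m))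
      let R := h r
      T ^ 2 - X ^ 2 - R ^ 2 = (h r / r) ^ 2 * (32 * m ^ 3 - 16 * m ^ 2 * r - r ^ 3) / r) ∧
    -- the identity inside the horizon
    (∀ r t : ℝ, 0 < r → r < 2 * m →
      let T := 4 * m / r * h r * Real.sqrt (2 * m / r - 1) * Real.cosh (t / (4 * m))
      let X := 4 * m / r * h r * Real.sqrt (2 * m / r - 1) * Real.sinh (t / (4 * m))
      let R := h r
      T ^ 2 - X ^ 2 - R ^ 2 = (h r / r) ^ 2 * (32 * m ^ 3 - 16 * m ^ 2 * r - r ^ 3) / r) ∧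
    -- the image of the hypersurface r = r̄ lies on the light cone of the origin
    ∀ rbar t : ℝ, 0 < rbar → rbar < 2 * m →
      32 * m ^ 3 - 16 * m ^ 2 * rbar - rbar ^ 3 = 0 →
      (4 * m / rbar * h rbar * Real.sqrt (2 * m / rbar - 1) * Real.cosh (t / (4 * m))) ^ 2
        = (4 * m / rbar * h rbar * Real.sqrt (2 * m / rbar - 1) * Real.sinh (t / (4 * m))) ^ 2
          + (h rbar) ^ 2 :=
  stmt_7_general m hm h
end

section
/- For the extreme Reissner–Nordström potential V(r) = (1 - Q/r)² with Q > 0 on r > Q, the function X(r) = ∫ √(4 - V^{-1}(2V - rV')²)/(2V) dr evaluates in closed form as X(r) = 4√Q (r - 2Q)/√(r - Q); i.e., d/dr [4√Q (r - 2Q)/√(r - Q)] = √(4 - V^{-1}(2V - rV')²)/(2V). -/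
open Real

/-- For the extreme Reissner–Nordström potential `V(r) = (1 - Q/r)²` on `r > Q`, the
closed form `X(r) = 4√Q (r - 2Q)/√(r - Q)` is an antiderivative of the integrand
`√(4 - V⁻¹(2V - rV')²)/(2V)`. -/
theorem stmt_15 (Q : ℝ) (hQ : 0 < Q) (V : ℝ → ℝ)
    (hV : ∀ r, V r = (1 - Q / r) ^ 2)
    (r : ℝ) (hr : Q < r) :
    HasDerivAt (fun s => 4 * Real.sqrt Q * (s - 2 * Q) / Real.sqrt (s - Q))
      (Real.sqrt (4 - (2 * V r - r * deriv V r) ^ 2 / V r) / (2 * V r)) r := by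
  have hVfun : V = fun s => (1 - Q / s) ^ 2 := funext hV
  subst hVfun
  have hr0 : (0:ℝ) < r := hQ.trans hr
  have hr0' : r ≠ 0 := hr0.ne'
  have hrQ : (0:ℝ) < r - Q := sub_pos.mpr hr
  have hrQ' : r - Q ≠ 0 := hrQ.ne'
  have hsq : Real.sqrt (r - Q) ≠ 0 := (Real.sqrt_pos.mpr hrQ).ne'
  have hsqsq : Real.sqrt (r - Q) ^ 2 = r - Q := Real.sq_sqrt hrQ.le
  -- derivative of V
  have hVd : HasDerivAt (fun s : ℝ => (1 - Q / s) ^ 2) (2 * Q * (r - Q) / r ^ 3) r := by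
    have h1 : HasDerivAt (fun s : ℝ => 1 - Q / s) (Q / r ^ 2) r := by
      have h2 := ((hasDerivAt_inv hr0').const_mul Q).const_sub 1
      simp only [div_eq_mul_inv]
      refine h2.congr_deriv (Eq.symm ?_)
      field_simp
    have := h1.pow 2
    refine this.congr_deriv (Eq.symm ?_)
    field_simp
    try ring
    field_simp
    ring
  have hderivV : deriv (fun s : ℝ => (1 - Q / s) ^ 2) r = 2 * Q * (r - Q) / r ^ 3 :=
    hVd.deriv
  -- simplify the argument of sqrt
  have hVr : (1 - Q / r) ^ 2 = (r - Q) ^ 2 / r ^ 2 := by field_simp; try ring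
  have harg : 4 - (2 * (1 - Q / r) ^ 2 - r * deriv (fun s : ℝ => (1 - Q / s) ^ 2) r) ^ 2
      / (1 - Q / r) ^ 2 = 16 * Q * (r - Q) / r ^ 2 := by
    rw [hderivV, hVr]
    field_simp
    try ring
  have hsqrtarg : Real.sqrt (16 * Q * (r - Q) / r ^ 2)
      = 4 * Real.sqrt Q * Real.sqrt (r - Q) / r := by
    have h : 16 * Q * (r - Q) / r ^ 2 = (4 * Real.sqrt Q * Real.sqrt (r - Q) / r) ^ 2 := by
      rw [div_pow, mul_pow, mul_pow, Real.sq_sqrt hQ.le, Real.sq_sqrt hrQ.le]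
      ring
    rw [h, Real.sqrt_sq (by positivity)]
  -- the closed form derivative
  have hnum : HasDerivAt (fun s : ℝ => 4 * Real.sqrt Q * (s - 2 * Q))
      (4 * Real.sqrt Q) r := by
    simpa using ((hasDerivAt_id r).sub_const (2 * Q)).const_mul (4 * Real.sqrt Q)
  have hden : HasDerivAt (fun s : ℝ => Real.sqrt (s - Q))
      (1 / (2 * Real.sqrt (r - Q))) r := by
    have := (Real.hasDerivAt_sqrt hrQ').comp r ((hasDerivAt_id r).sub_const Q)
    simpa [Function.comp_def] using this
  have hD := hnum.div hden hsq
  refine hD.congr_deriv (Eq.symm ?_)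
  have hbeta : (fun s : ℝ => (1 - Q / s) ^ 2) r = (r - Q) ^ 2 / r ^ 2 := hVr
  rw [harg, hsqrtarg, hbeta, hsqsq]
  field_simp
  ring_nf
  rw [hsqsq]; ring
end

section
/- Penrose's estimate: let m > 0, r₀ > 5m, V(r) = 1 - 2m/r, A = r₀/√(V(r₀)), and χ(ρ) = V(ρ)^{-1}[(1 - (r₀²/ρ²)(V(ρ)/V(r₀)))^{-1/2} - 1] for ρ > r₀, and let ψ(ρ) = V(r₀)^{-1}[(1 - r₀²/(ρ²V(r₀)))^{-1/2} - 1]. Then the improper integral ∫_A^∞ ψ(ρ) dρ converges and equals r₀ V(r₀)^{-3/2}(1 - √(1 - r₀²/(A²V(r₀)))); moreover ψ(ρ) > χ(ρ) for ρ > A. -/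
open Real MeasureTheory Set

/-- Penrose's estimate: with `V(r) = 1 - 2m/r`, `A = r₀/√(V(r₀))`,
`χ(ρ) = V(ρ)⁻¹[(1 - (r₀²/ρ²)(V(ρ)/V(r₀)))^{-1/2} - 1]` and
`ψ(ρ) = V(r₀)⁻¹[(1 - r₀²/(ρ²V(r₀)))^{-1/2} - 1]`, one has `χ(ρ) < ψ(ρ)` for `ρ > A`,
and the improper integral `∫_A^∞ ψ` converges with value `r₀ V(r₀)^{-3/2}`. -/
theorem stmt_18 (m r₀ : ℝ) (hm : 0 < m) (hr₀ : 5 * m < r₀)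
    (V : ℝ → ℝ) (hV : ∀ r, V r = 1 - 2 * m / r)
    (A : ℝ) (hA : A = r₀ / Real.sqrt (V r₀))
    (χ ψ : ℝ → ℝ)
    (hχ : ∀ ρ, χ ρ = (V ρ)⁻¹ *
      ((Real.sqrt (1 - r₀ ^ 2 / ρ ^ 2 * (V ρ / V r₀)))⁻¹ - 1))
    (hψ : ∀ ρ, ψ ρ = (V r₀)⁻¹ *
      ((Real.sqrt (1 - r₀ ^ 2 / (ρ ^ 2 * V r₀)))⁻¹ - 1)) :
    (∀ ρ, A < ρ → χ ρ < ψ ρ) ∧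
    IntegrableOn ψ (Ioi A) ∧
    ∫ ρ in Ioi A, ψ ρ = r₀ / (V r₀ * Real.sqrt (V r₀)) := by
  have hr0 : 0 < r₀ := by linarith
  have h2m : 2 * m < r₀ := by linarith
  have hc : 0 < V r₀ := by
    rw [hV]
    have : 2 * m / r₀ < 1 := (div_lt_one hr0).2 h2m
    linarith
  have hc1 : V r₀ < 1 := by
    rw [hV]
    have : 0 < 2 * m / r₀ := by positivity
    linarith
  have hsc : 0 < Real.sqrt (V r₀) := Real.sqrt_pos.2 hc
  have hsc1 : Real.sqrt (V r₀) < 1 := by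
    have := Real.sqrt_lt_sqrt hc.le hc1
    simpa using this
  have hA0 : 0 < A := by rw [hA]; positivity
  have hAr : r₀ < A := by
    rw [hA, lt_div_iff₀ hsc]
    nlinarith
  have hA2 : A ^ 2 = r₀ ^ 2 / V r₀ := by
    rw [hA, div_pow, Real.sq_sqrt hc.le]
  have key : ∀ ρ : ℝ, r₀ ^ 2 / (ρ ^ 2 * V r₀) = A ^ 2 / ρ ^ 2 := by
    intro ρ; rw [hA2, div_div, mul_comm]
  have hfrac : ∀ ρ, A < ρ → A ^ 2 / ρ ^ 2 < 1 := by
    intro ρ hρ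
    have hρ0 : 0 < ρ := hA0.trans hρ
    rw [div_lt_one (by positivity)]
    nlinarith
  -- pointwise inequality
  have part1 : ∀ ρ, A < ρ → χ ρ < ψ ρ := by
    intro ρ hρ
    have hρ0 : 0 < ρ := hA0.trans hρ
    have hρr : r₀ < ρ := hAr.trans hρ
    have hVρ : 0 < V ρ := by
      rw [hV]
      have : 2 * m / ρ < 1 := (div_lt_one hρ0).2 (by linarith)
      linarith
    have hVρ1 : V ρ < 1 := by
      rw [hV]
      have : 0 < 2 * m / ρ := by positivity
      linarith
    have hVmono : V r₀ < V ρ := by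
      rw [hV, hV]
      have := div_lt_div_of_pos_left (show (0:ℝ) < 2 * m by linarith) hr0 hρr
      linarith
    rw [hχ ρ, hψ ρ, key ρ]
    set x₁ := 1 - r₀ ^ 2 / ρ ^ 2 * (V ρ / V r₀) with hx₁
    set x₂ := 1 - A ^ 2 / ρ ^ 2 with hx₂
    have hx₂pos : 0 < x₂ := by
      have := hfrac ρ hρ; rw [hx₂]; linarith
    have hdiff : x₁ - x₂ = r₀ ^ 2 / (ρ ^ 2 * V r₀) * (1 - V ρ) := by
      rw [hx₁, hx₂, hA2]
      field_simp
      ring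
    have hx12 : x₂ < x₁ := by
      rw [← sub_pos, hdiff]
      exact mul_pos (by positivity) (by linarith)
    have hx₁le : x₁ ≤ 1 := by
      rw [hx₁]
      have : 0 ≤ r₀ ^ 2 / ρ ^ 2 * (V ρ / V r₀) := by positivity
      linarith
    have hs₂ : 0 < Real.sqrt x₂ := Real.sqrt_pos.2 hx₂pos
    have hs12 : Real.sqrt x₂ < Real.sqrt x₁ := Real.sqrt_lt_sqrt hx₂pos.le hx12
    have hs₁pos : 0 < Real.sqrt x₁ := hs₂.trans hs12
    have hs₁le : Real.sqrt x₁ ≤ 1 := Real.sqrt_le_one.2 hx₁le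
    have hinv : (Real.sqrt x₁)⁻¹ < (Real.sqrt x₂)⁻¹ := by
      exact inv_strictAnti₀ hs₂ hs12
    have hinv1 : 1 ≤ (Real.sqrt x₁)⁻¹ := by
      have := inv_anti₀ hs₁pos hs₁le
      simpa using this
    calc (V ρ)⁻¹ * ((Real.sqrt x₁)⁻¹ - 1)
        ≤ (V r₀)⁻¹ * ((Real.sqrt x₁)⁻¹ - 1) := by
          apply mul_le_mul_of_nonneg_right _ (by linarith)
          exact inv_anti₀ hc hVmono.le
      _ < (V r₀)⁻¹ * ((Real.sqrt x₂)⁻¹ - 1) := by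
          apply mul_lt_mul_of_pos_left (by linarith) (by positivity)
  -- nonnegativity of ψ
  have hψnn : ∀ ρ ∈ Ioi A, 0 ≤ ψ ρ := by
    intro ρ hρ
    simp only [mem_Ioi] at hρ
    have hρ0 : 0 < ρ := hA0.trans hρ
    rw [hψ ρ, key ρ]
    have hx : 0 < 1 - A ^ 2 / ρ ^ 2 := by
      have := hfrac ρ hρ; linarith
    have hx1 : 1 - A ^ 2 / ρ ^ 2 ≤ 1 := by
      have : 0 ≤ A ^ 2 / ρ ^ 2 := by positivity
      linarith
    have hspos : 0 < Real.sqrt (1 - A ^ 2 / ρ ^ 2) := Real.sqrt_pos.2 hx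
    have hsle : Real.sqrt (1 - A ^ 2 / ρ ^ 2) ≤ 1 := Real.sqrt_le_one.2 hx1
    have hinv1 : 1 ≤ (Real.sqrt (1 - A ^ 2 / ρ ^ 2))⁻¹ := by
      have := inv_anti₀ hspos hsle
      simpa using this
    have : (0:ℝ) ≤ (V r₀)⁻¹ := by positivity
    nlinarith
  -- derivative
  have hderiv : ∀ ρ ∈ Ioi A,
      HasDerivAt (fun ρ => (V r₀)⁻¹ * (Real.sqrt (ρ ^ 2 - A ^ 2) - ρ)) (ψ ρ) ρ := by
    intro ρ hρ
    simp only [mem_Ioi] at hρ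
    have hρ0 : 0 < ρ := hA0.trans hρ
    have hpos : 0 < ρ ^ 2 - A ^ 2 := by nlinarith
    have h1 : HasDerivAt (fun ρ : ℝ => ρ ^ 2 - A ^ 2) (2 * ρ) ρ := by
      simpa using ((hasDerivAt_pow 2 ρ).sub_const (A ^ 2))
    have h2 : HasDerivAt (fun ρ : ℝ => Real.sqrt (ρ ^ 2 - A ^ 2))
        (1 / (2 * Real.sqrt (ρ ^ 2 - A ^ 2)) * (2 * ρ)) ρ :=
      (Real.hasDerivAt_sqrt (ne_of_gt hpos)).comp ρ h1
    have h3 := (h2.sub (hasDerivAt_id ρ)).const_mul ((V r₀)⁻¹)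
    refine h3.congr_deriv ?_
    symm
    rw [hψ ρ, key ρ]
    have hsq : 0 < Real.sqrt (ρ ^ 2 - A ^ 2) := Real.sqrt_pos.2 hpos
    have heq : Real.sqrt (1 - A ^ 2 / ρ ^ 2) = Real.sqrt (ρ ^ 2 - A ^ 2) / ρ := by
      rw [show 1 - A ^ 2 / ρ ^ 2 = (ρ ^ 2 - A ^ 2) / ρ ^ 2 by field_simp,
        Real.sqrt_div hpos.le, Real.sqrt_sq hρ0.le]
    rw [heq, inv_div]
    field_simp
  -- continuity
  have hcont : ContinuousWithinAt (fun ρ => (V r₀)⁻¹ * (Real.sqrt (ρ ^ 2 - A ^ 2) - ρ))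
      (Ici A) A := by
    apply Continuous.continuousWithinAt
    exact continuous_const.mul
      ((Real.continuous_sqrt.comp ((continuous_pow 2).sub continuous_const)).sub
        continuous_id)
  -- limit at infinity
  have hlim0 : Filter.Tendsto (fun ρ => Real.sqrt (ρ ^ 2 - A ^ 2) - ρ)
      Filter.atTop (nhds 0) := by
    apply tendsto_of_tendsto_of_tendsto_of_le_of_le'
      (g := fun ρ : ℝ => -(A ^ 2) / ρ) (h := fun _ : ℝ => (0:ℝ))
    · exact Filter.Tendsto.div_atTop tendsto_const_nhds Filter.tendsto_id
    · exact tendsto_const_nhds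
    · filter_upwards [Filter.eventually_ge_atTop A] with ρ hρ
      have hρ0 : 0 < ρ := lt_of_lt_of_le hA0 hρ
      have hA2ρ : A ^ 2 ≤ ρ ^ 2 := by nlinarith
      have h1 : ρ - A ^ 2 / ρ ≤ Real.sqrt (ρ ^ 2 - A ^ 2) := by
        rw [show ρ - A ^ 2 / ρ = (ρ ^ 2 - A ^ 2) / ρ by field_simp]
        apply Real.le_sqrt_of_sq_le
        rw [div_pow, div_le_iff₀ (by positivity)]
        nlinarith [mul_nonneg (sub_nonneg.2 hA2ρ) (sq_nonneg A)]
      have h2 : -(A ^ 2) / ρ = (ρ - A ^ 2 / ρ) - ρ := by ring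
      linarith
    · filter_upwards [Filter.eventually_ge_atTop (0:ℝ)] with ρ hρ
      have : Real.sqrt (ρ ^ 2 - A ^ 2) ≤ ρ := by
        calc Real.sqrt (ρ ^ 2 - A ^ 2) ≤ Real.sqrt (ρ ^ 2) :=
              Real.sqrt_le_sqrt (by nlinarith)
          _ = ρ := Real.sqrt_sq hρ
      linarith
  have hlim : Filter.Tendsto (fun ρ => (V r₀)⁻¹ * (Real.sqrt (ρ ^ 2 - A ^ 2) - ρ))
      Filter.atTop (nhds 0) := by
    have := hlim0.const_mul ((V r₀)⁻¹)
    simpa using this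
  refine ⟨part1, ?_, ?_⟩
  · exact integrableOn_Ioi_deriv_of_nonneg hcont hderiv hψnn hlim
  · rw [integral_Ioi_of_hasDerivAt_of_nonneg hcont hderiv hψnn hlim]
    rw [sub_self, Real.sqrt_zero, hA]
    field_simp
    ring
end
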